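/- Let n₁, …, n_s ≥ 1 be integers with p = n₁ + ⋯ + n_s, let M = diag(N_{n₁}, …, N_{n_s}) be the p×p block-diagonal matrix of nilpotent Jordan blocks (ones on each block's superdiagonal), and set n_max := max_ℓ n_ℓ. Let λ ∈ ℂ, m ≥ 1 an integer, and R a p×p real matrix with nonnegative entries. Define β_i^{(k)} for 0 ≤ i ≤ n_max−1 and 1 ≤ k ≤ m by β_0^{(1)} := λ−1, β_1^{(1)} := 1 (when n_max ≥ 2), β_i^{(1)} := 0 for i ≥ 2, and β_0^{(k+1)} := (λ−k−1)·β_0^{(k)}, β_i^{(k+1)} := (λ−k−1)·β_i^{(k)} + β_{i−1}^{(k)} for i ≥ 1; let D_k := ∑_{i=0}^{n_max−1} β_i^{(k)}·M^i. Let rr be the 1×p row vector with rr_j := max_i R_{ij} and 1_p the all-ones column vector. For each ℓ and k, let R^{(ℓ)} be the columns of R in block ℓ, rc^{(ℓ)} ∈ ℝ^p with rc^{(ℓ)}_i := max_j (R^{(ℓ)})_{ij}, w^{(k,ℓ)} the 1×n_ℓ row vector whose j-th entry is ∑_{i=0}^{j−1}|β_i^{(k)}|, and 𝖰_k := [rc^{(1)}·w^{(k,1)},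 …, rc^{(s)}·w^{(k,s)}]. Define 𝖲₁ := R and 𝖲_{k+1} := 𝖰_k + |λ−k−1|·𝖲_k + M·𝖲_k + (1_p·rr)·𝖲_k for k = 1, …, m−1. Then for any p×p complex matrices B₁, …, B_m with |B_i − ((λ−i)·I_p + M)| ≤ R entrywise for all i, one has | B_m·B_{m−1}·⋯·B₁ − D_m | ≤ 𝖲_m entrywise. -/

import Mathlib

/-- The block-diagonal matrix of nilpotent Jordan blocks (real version). -/
def jordanDiagR {s : ℕ} (n : Fin s → ℕ) :
    Matrix ((ℓ : Fin s) × Fin (n ℓ)) ((ℓ : Fin s) × Fin (n ℓ)) ℝ :=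
  Matrix.of fun a b => if a.1 = b.1 ∧ (b.2 : ℕ) = (a.2 : ℕ) + 1 then 1 else 0

/-- The block-diagonal matrix of nilpotent Jordan blocks (complex version). -/
def jordanDiagC {s : ℕ} (n : Fin s → ℕ) :
    Matrix ((ℓ : Fin s) × Fin (n ℓ)) ((ℓ : Fin s) × Fin (n ℓ)) ℂ :=
  Matrix.of fun a b => if a.1 = b.1 ∧ (b.2 : ℕ) = (a.2 : ℕ) + 1 then 1 else 0

/-- `betaD lam k i` is the coefficient β_i^{(k)} (descending version):
β_0^{(1)} = λ−1, β_1^{(1)} = 1, β_i^{(1)} = 0 for i ≥ 2, and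
β_0^{(k+1)} = (λ−k−1)β_0^{(k)}, β_i^{(k+1)} = (λ−k−1)β_i^{(k)} + β_{i−1}^{(k)} for i ≥ 1. -/
noncomputable def betaD (lam : ℂ) : ℕ → ℕ → ℂ
  | 0 => fun _ => 0
  | 1 => fun i => if i = 0 then lam - 1 else if i = 1 then 1 else 0
  | (k + 2) => fun i =>
      (lam - (k + 1) - 1) * betaD lam (k + 1) i +
        if i = 0 then 0 else betaD lam (k + 1) (i - 1)

/-- The matrix `𝖰_k` built from the coefficients `betaD lam k`. -/
noncomputable def QmatD {s : ℕ} (n : Fin s → ℕ) (lam : ℂ)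
    (R : Matrix ((ℓ : Fin s) × Fin (n ℓ)) ((ℓ : Fin s) × Fin (n ℓ)) ℝ) (k : ℕ) :
    Matrix ((ℓ : Fin s) × Fin (n ℓ)) ((ℓ : Fin s) × Fin (n ℓ)) ℝ :=
  Matrix.of fun i j => (⨆ a : Fin (n j.1), R i ⟨j.1, a⟩) *
    ∑ t ∈ Finset.range ((j.2 : ℕ) + 1), norm (betaD lam k t)

/-- The matrix `1_p · rr`, where `rr_j = max_i R_{ij}`. -/
noncomputable def colMaxMat {ι : Type*} [Fintype ι] (R : Matrix ι ι ℝ) : Matrix ι ι ℝ :=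
  Matrix.of fun _ j => ⨆ i, R i j

/-- The radius sequence 𝖲₁ := R,
`𝖲_{k+1} := 𝖰_k + |λ−k−1|·𝖲_k + M·𝖲_k + (1_p·rr)·𝖲_k` for k ≥ 1. -/
noncomputable def SseqJ {s : ℕ} (n : Fin s → ℕ) (lam : ℂ)
    (R : Matrix ((ℓ : Fin s) × Fin (n ℓ)) ((ℓ : Fin s) × Fin (n ℓ)) ℝ) :
    ℕ → Matrix ((ℓ : Fin s) × Fin (n ℓ)) ((ℓ : Fin s) × Fin (n ℓ)) ℝ
  | 0 => R
  | 1 => R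
  | (k + 2) => QmatD n lam R (k + 1) +
      norm (lam - (k + 1) - 1) • SseqJ n lam R (k + 1) +
      jordanDiagR n * SseqJ n lam R (k + 1) + colMaxMat R * SseqJ n lam R (k + 1)

/-!
Put `F_k := B_k ⋯ B_1 - D_k` and `Δ_{k+1} := B_{k+1} - ((λ-k-1) I + M)`. Since `M ^ n_max = 0`,
the recurrence for `β` says exactly `D_{k+1} = (λ-k-1) D_k + M D_k`, hence
`F_{k+1} = Δ_{k+1} D_k + (λ-k-1) F_k + M F_k + Δ_{k+1} F_k`.
Bounding these four terms entrywise gives the four summands of `𝖲_{k+1}`: `D_k` is block upper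
triangular Toeplitz with entries `β^{(k)}`, so `R |D_k| ≤ 𝖰_k`, and `R 𝖲_k ≤ (1_p rr) 𝖲_k`
because `𝖲_k ≥ 0`.
-/

open Finset

section Entrywise

variable {ι 𝕜 : Type*} [NormedRing 𝕜]

def EntrywiseBound (A : Matrix ι ι 𝕜) (S : Matrix ι ι ℝ) : Prop :=
  ∀ a b, ‖A a b‖ ≤ S a b

namespace EntrywiseBound

variable {A B : Matrix ι ι 𝕜} {S T : Matrix ι ι ℝ}

lemma nonneg (h : EntrywiseBound A S) (a b : ι) : 0 ≤ S a b :=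
  (norm_nonneg _).trans (h a b)

lemma mono (h : EntrywiseBound A S) (hST : ∀ a b, S a b ≤ T a b) : EntrywiseBound A T :=
  fun a b => (h a b).trans (hST a b)

lemma add (hA : EntrywiseBound A S) (hB : EntrywiseBound B T) : EntrywiseBound (A + B) (S + T) :=
  fun a b => (norm_add_le _ _).trans (add_le_add (hA a b) (hB a b))

lemma smul (c : 𝕜) (hA : EntrywiseBound A S) : EntrywiseBound (c • A) (‖c‖ • S) :=
  fun a b => (norm_mul_le _ _).trans (mul_le_mul_of_nonneg_left (hA a b) (norm_nonneg c))

lemma mul [Fintype ι] (hA : EntrywiseBound A S) (hB : EntrywiseBound B T) :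
    EntrywiseBound (A * B) (S * T) :=
  fun a b => (norm_sum_le _ _).trans <| sum_le_sum fun c _ =>
    (norm_mul_le _ _).trans <| mul_le_mul (hA a c) (hB c b) (norm_nonneg _) (hA.nonneg a c)

end EntrywiseBound

lemma entrywiseBound_map_norm (A : Matrix ι ι 𝕜) : EntrywiseBound A (A.map norm) :=
  fun _ _ => le_rfl

end Entrywise

lemma mul_le_colMaxMat_mul {ι : Type*} [Fintype ι] {R S : Matrix ι ι ℝ} (hS : ∀ a b, 0 ≤ S a b)
    (a b : ι) : (R * S) a b ≤ (colMaxMat R * S) a b :=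
  sum_le_sum fun c _ => mul_le_mul_of_nonneg_right
    (le_ciSup (Set.finite_range fun i => R i c).bddAbove a) (hS c b)

section NilpotentSums

variable {R A : Type*} [CommSemiring R] [Semiring A] [Algebra R A] {N : A} {K : ℕ}

lemma mul_sum_smul_pow_of_pow_eq_zero (hN : N ^ K = 0) (c : ℕ → R) :
    N * ∑ i ∈ range K, c i • N ^ i =
      ∑ i ∈ range K, (if i = 0 then 0 else c (i - 1)) • N ^ i := by
  cases K with
  | zero => simp
  | succ K =>
    rw [mul_sum, sum_range_succ, sum_range_succ', mul_smul_comm, ← pow_succ', hN, smul_zero,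
      add_zero, if_pos rfl, zero_smul, add_zero]
    exact sum_congr rfl fun i _ => by rw [mul_smul_comm, pow_succ']; simp

lemma sum_ite_smul_pow_of_pow_eq_zero (hN : N ^ K = 0) :
    ∑ i ∈ range K, (if i = 0 then (1 : R) else 0) • N ^ i = 1 := by
  cases K with
  | zero => simpa using hN.symm
  | succ K => simp

end NilpotentSums

lemma sum_fin_ite_le_sub_eq_sum_range {M : Type*} [AddCommMonoid M] (f : ℕ → M) {N : ℕ}
    (y : Fin N) :
    ∑ x : Fin N, (if (x : ℕ) ≤ y then f (y - x) else 0) = ∑ t ∈ range (y + 1), f t := by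
  have hfilter : (range N).filter (· ≤ (y : ℕ)) = range (y + 1) := by
    ext x; simp only [mem_filter, mem_range]; omega
  rw [Fin.sum_univ_eq_sum_range (fun x => if x ≤ (y : ℕ) then f (y - x) else 0), ← sum_filter,
    hfilter, ← sum_range_reflect]
  exact sum_congr rfl fun x hx => by
    rw [add_tsub_cancel_right, Nat.sub_sub_self (Nat.lt_succ_iff.mp (mem_range.mp hx))]

section Jordan

variable {s : ℕ} {n : Fin s → ℕ}

lemma jordanDiagC_apply (a b : (ℓ : Fin s) × Fin (n ℓ)) :
    jordanDiagC n a b = if a.1 = b.1 ∧ (b.2 : ℕ) = a.2 + 1 then 1 else 0 := rfl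

lemma jordanDiagC_pow_apply (t : ℕ) (a b : (ℓ : Fin s) × Fin (n ℓ)) :
    (jordanDiagC n ^ t) a b = if a.1 = b.1 ∧ (b.2 : ℕ) = a.2 + t then 1 else 0 := by
  induction t generalizing a with
  | zero =>
    obtain ⟨ℓ, x⟩ := a; obtain ⟨ℓ', y⟩ := b
    by_cases h : ℓ = ℓ'
    · subst h; simp [Matrix.one_apply, Fin.ext_iff, eq_comm]
    · simp [h]
  | succ t ih =>
    simp only [pow_succ', Matrix.mul_apply, ih, jordanDiagC_apply, ite_mul, one_mul, zero_mul]
    by_cases h : (a.2 : ℕ) + 1 < n a.1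
    · rw [sum_eq_single ⟨a.1, ⟨a.2 + 1, h⟩⟩, if_pos ⟨rfl, rfl⟩, add_right_comm, add_assoc]
      · rintro ⟨ℓ, x⟩ - hne
        refine if_neg ?_
        rintro ⟨rfl, hx⟩
        exact hne (Sigma.ext rfl (heq_of_eq (Fin.ext hx)))
      · simp
    · rw [if_neg, sum_eq_zero]
      · rintro ⟨ℓ, x⟩ -
        refine if_neg ?_
        rintro ⟨rfl, hx⟩
        exact h (hx ▸ x.isLt)
      · rintro ⟨hab, hb⟩
        have : (b.2 : ℕ) < n a.1 := by rw [hab]; exact b.2.isLt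
        omega

lemma jordanDiagC_pow_sup_eq_zero : jordanDiagC n ^ univ.sup n = 0 := by
  ext a b
  rw [jordanDiagC_pow_apply, Matrix.zero_apply, if_neg]
  rintro ⟨hab, hb⟩
  have : (b.2 : ℕ) < n a.1 := by rw [hab]; exact b.2.isLt
  have := le_sup (f := n) (mem_univ a.1)
  omega

variable (n) in
noncomputable def betaMat (lam : ℂ) (k : ℕ) :
    Matrix ((ℓ : Fin s) × Fin (n ℓ)) ((ℓ : Fin s) × Fin (n ℓ)) ℂ :=
  ∑ i ∈ range (univ.sup n), betaD lam k i • jordanDiagC n ^ i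

/- `β^{(1)}` is the recurrence applied to `β^{(0)} := δ₀` (that is, `D₀ = I`), although
`betaD lam 0` is `0`. -/
lemma betaD_one_eq (lam : ℂ) (i : ℕ) :
    betaD lam 1 i = (lam - 1) * (if i = 0 then 1 else 0) +
      if i = 0 then 0 else if i - 1 = 0 then 1 else 0 := by
  rcases i with _ | _ | i <;> simp [betaD]

lemma betaMat_one (lam : ℂ) : betaMat n lam 1 = (lam - 1) • 1 + jordanDiagC n := by
  have hE := sum_ite_smul_pow_of_pow_eq_zero (R := ℂ) (jordanDiagC_pow_sup_eq_zero (n := n))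
  have hME := mul_sum_smul_pow_of_pow_eq_zero (jordanDiagC_pow_sup_eq_zero (n := n))
    fun i => if i = 0 then (1 : ℂ) else 0
  rw [hE, mul_one] at hME
  simp_rw [betaMat, betaD_one_eq, add_smul, mul_smul]
  rw [sum_add_distrib, ← smul_sum, hE, ← hME]

lemma betaMat_add_two (lam : ℂ) (k : ℕ) :
    betaMat n lam (k + 2) =
      (lam - (k + 1) - 1) • betaMat n lam (k + 1) + jordanDiagC n * betaMat n lam (k + 1) := by
  rw [betaMat, betaMat, mul_sum_smul_pow_of_pow_eq_zero jordanDiagC_pow_sup_eq_zero, smul_sum,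
    ← sum_add_distrib]
  exact sum_congr rfl fun i _ => by rw [betaD, add_smul, mul_smul]

lemma betaMat_apply (lam : ℂ) (k : ℕ) (a b : (ℓ : Fin s) × Fin (n ℓ)) :
    betaMat n lam k a b =
      if a.1 = b.1 ∧ (a.2 : ℕ) ≤ b.2 then betaD lam k (b.2 - a.2) else 0 := by
  simp only [betaMat, Matrix.sum_apply, Matrix.smul_apply, jordanDiagC_pow_apply, smul_eq_mul,
    mul_ite, mul_one, mul_zero]
  by_cases h : a.1 = b.1 ∧ (a.2 : ℕ) ≤ b.2
  · rw [if_pos h, sum_eq_single ((b.2 : ℕ) - a.2)]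
    · exact if_pos ⟨h.1, by omega⟩
    · exact fun i _ hi => if_neg fun h' => hi (by omega)
    · refine fun hK => absurd (mem_range.2 ?_) hK
      have := le_sup (f := n) (mem_univ b.1)
      omega
  · rw [if_neg h]
    exact sum_eq_zero fun i _ => if_neg fun h' => h ⟨h'.1, by omega⟩

lemma mul_map_norm_betaMat_le_QmatD
    (R : Matrix ((ℓ : Fin s) × Fin (n ℓ)) ((ℓ : Fin s) × Fin (n ℓ)) ℝ) (lam : ℂ) (k : ℕ)
    (a b : (ℓ : Fin s) × Fin (n ℓ)) :
    (R * (betaMat n lam k).map norm) a b ≤ QmatD n lam R k a b := by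
  obtain ⟨ℓ, y⟩ := b
  set A := ⨆ x : Fin (n ℓ), R a ⟨ℓ, x⟩
  calc (R * (betaMat n lam k).map norm) a ⟨ℓ, y⟩
      = ∑ x : Fin (n ℓ), R a ⟨ℓ, x⟩ * ‖betaMat n lam k ⟨ℓ, x⟩ ⟨ℓ, y⟩‖ := by
        rw [Matrix.mul_apply, Fintype.sum_sigma, Fintype.sum_eq_single ℓ]
        · rfl
        · intro ℓ' hℓ'
          exact sum_eq_zero fun x _ => by simp [betaMat_apply, hℓ']
    _ ≤ ∑ x : Fin (n ℓ), A * (if (x : ℕ) ≤ y then ‖betaD lam k (y - x)‖ else 0) := by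
        refine sum_le_sum fun x _ => ?_
        rw [betaMat_apply]
        split_ifs with h h' h'
        · exact mul_le_mul_of_nonneg_right
            (le_ciSup (Set.finite_range fun x : Fin (n ℓ) => R a ⟨ℓ, x⟩).bddAbove x) (norm_nonneg _)
        · exact absurd h.2 h'
        · exact absurd ⟨rfl, h'⟩ h
        · simp
    _ = QmatD n lam R k a ⟨ℓ, y⟩ := by
        rw [← mul_sum, sum_fin_ite_le_sub_eq_sum_range (fun t => ‖betaD lam k t‖) y]
        rfl

lemma entrywiseBound_jordanDiagC : EntrywiseBound (jordanDiagC n) (jordanDiagR n) := fun a b => by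
  simp only [jordanDiagC, jordanDiagR, Matrix.of_apply]
  split_ifs <;> simp

theorem entrywiseBound_prod_sub_betaMat (lam : ℂ)
    (R : Matrix ((ℓ : Fin s) × Fin (n ℓ)) ((ℓ : Fin s) × Fin (n ℓ)) ℝ) (j : ℕ)
    (B : Fin (j + 1) → Matrix ((ℓ : Fin s) × Fin (n ℓ)) ((ℓ : Fin s) × Fin (n ℓ)) ℂ)
    (hB : ∀ i, EntrywiseBound (B i - ((lam - ((i : ℕ) + 1)) • 1 + jordanDiagC n)) R) :
    EntrywiseBound ((List.ofFn B).reverse.prod - betaMat n lam (j + 1))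
      (SseqJ n lam R (j + 1)) := by
  induction j with
  | zero => simpa [betaMat_one, SseqJ] using hB 0
  | succ j ih =>
    set c : ℂ := lam - (j + 1) - 1
    set P := (List.ofFn fun i : Fin (j + 1) => B i.castSucc).reverse.prod
    set D := betaMat n lam (j + 1)
    set Δ := B (Fin.last (j + 1)) - (c • 1 + jordanDiagC n)
    have hF : EntrywiseBound (P - D) (SseqJ n lam R (j + 1)) := ih _ fun i => hB i.castSucc
    have hΔ : EntrywiseBound Δ R := by
      have hc : lam - (((Fin.last (j + 1) : ℕ) : ℂ) + 1) = c := by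
        simp only [c, Fin.val_last, Nat.cast_add, Nat.cast_one]; ring
      simpa only [hc] using hB (Fin.last (j + 1))
    have hprod : (List.ofFn B).reverse.prod = B (Fin.last (j + 1)) * P := by
      rw [List.ofFn_succ', List.concat_eq_append, List.reverse_append, List.prod_append,
        List.reverse_singleton, List.prod_singleton]
    have key : B (Fin.last (j + 1)) * P - betaMat n lam (j + 2) =
        Δ * D + c • (P - D) + jordanDiagC n * (P - D) + Δ * (P - D) := by
      rw [betaMat_add_two, ← sub_add_cancel (B (Fin.last (j + 1))) (c • 1 + jordanDiagC n)]
      simp only [Δ, D, add_mul, mul_sub, smul_mul_assoc, one_mul, smul_sub]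
      abel
    rw [hprod, key]
    exact ((hΔ.mul (entrywiseBound_map_norm D)).mono (mul_map_norm_betaMat_le_QmatD R lam _)
      |>.add (hF.smul c) |>.add (entrywiseBound_jordanDiagC.mul hF)
      |>.add ((hΔ.mul hF).mono (mul_le_colMaxMat_mul hF.nonneg)))

end Jordan

theorem stmt_16_general {s : ℕ} (n : Fin s → ℕ)
    (lam : ℂ) (m : ℕ) (hm : 1 ≤ m)
    (R : Matrix ((ℓ : Fin s) × Fin (n ℓ)) ((ℓ : Fin s) × Fin (n ℓ)) ℝ)
    (B : Fin m → Matrix ((ℓ : Fin s) × Fin (n ℓ)) ((ℓ : Fin s) × Fin (n ℓ)) ℂ)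
    (hB : ∀ i : Fin m, ∀ a b, norm
      (B i a b - ((lam - ((i : ℕ) + 1)) • (1 : Matrix ((ℓ : Fin s) × Fin (n ℓ))
        ((ℓ : Fin s) × Fin (n ℓ)) ℂ) + jordanDiagC n) a b) ≤ R a b) :
    ∀ a b, norm
        (((List.ofFn B).reverse.prod) a b -
          (∑ i ∈ Finset.range (Finset.univ.sup n),
            betaD lam m i • jordanDiagC n ^ i) a b) ≤
      SseqJ n lam R m a b := by
  obtain ⟨j, rfl⟩ := Nat.exists_eq_add_of_le' hm
  exact entrywiseBound_prod_sub_betaMat lam R j B hB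

theorem stmt_16 {s : ℕ} (hs : 1 ≤ s) (n : Fin s → ℕ) (hn : ∀ ℓ, 1 ≤ n ℓ)
    (lam : ℂ) (m : ℕ) (hm : 1 ≤ m)
    (R : Matrix ((ℓ : Fin s) × Fin (n ℓ)) ((ℓ : Fin s) × Fin (n ℓ)) ℝ)
    (hR : ∀ i j, 0 ≤ R i j)
    (B : Fin m → Matrix ((ℓ : Fin s) × Fin (n ℓ)) ((ℓ : Fin s) × Fin (n ℓ)) ℂ)
    (hB : ∀ i : Fin m, ∀ a b, norm
      (B i a b - ((lam - ((i : ℕ) + 1)) • (1 : Matrix ((ℓ : Fin s) × Fin (n ℓ))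
        ((ℓ : Fin s) × Fin (n ℓ)) ℂ) + jordanDiagC n) a b) ≤ R a b) :
    ∀ a b, norm
        (((List.ofFn B).reverse.prod) a b -
          (∑ i ∈ Finset.range (Finset.univ.sup n),
            betaD lam m i • jordanDiagC n ^ i) a b) ≤
      SseqJ n lam R m a b :=
  stmt_16_general n lam m hm R B hB
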